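/- arXiv:2502.08272 — 6 statements merged into one kernel-verified Lean document; each statement's English description precedes it below -/
import Mathlib

section
/- Let w, n, s, d be positive integers with s ≥ log w and let ε ∈ (0,1). Suppose there exists a (2s, ε/(3n))-extractor Ext : {0,1}^{3s} × {0,1}^d → {0,1}^s. Then there exists a (3s, 1, ε)-weighted pseudorandom reduction from B(n,s,w) to B(n,d,w). -/
open Real Finset
open scoped Classical

noncomputable section

/-- Expectation of a real-valued function under the uniform distribution on a finite type. -/
def uniformExp {α : Type*} [Fintype α] (f : α → ℝ) : ℝ :=
  (∑ x, f x) / (Fintype.card α)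

/-- A read-once branching program of length `n`, alphabet `{0,1}^s`, width `w`. -/
structure ROBP (n s w : ℕ) where
  δ : Fin n → Fin w → (Fin s → Bool) → Fin w
  start : Fin w
  accept : Finset (Fin w)

def ROBP.run {n s w : ℕ} (P : ROBP n s w) (x : Fin n → Fin s → Bool) : Fin w :=
  Fin.foldl n (fun v i => P.δ i v (x i)) P.start

def ROBP.fn {n s w : ℕ} (P : ROBP n s w) (x : Fin n → Fin s → Bool) : ℝ :=
  if P.run x ∈ P.accept then 1 else 0

/-- The class of functions computed by ROBPs of length `n`, alphabet `{0,1}^s`, width `w`. -/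
def Bclass (n s w : ℕ) : Set ((Fin n → Fin s → Bool) → ℝ) :=
  {f | ∃ P : ROBP n s w, f = P.fn}

/-- `(G, σ)` is a `W`-bounded `ε`-WPRG for the class `F`. -/
def IsWPRG {n s : ℕ} {ι : Type} [Fintype ι]
    (F : Set ((Fin n → Fin s → Bool) → ℝ))
    (G : ι → Fin n → Fin s → Bool) (σ : ι → ℝ) (W ε : ℝ) : Prop :=
  (∀ r, |σ r| ≤ W) ∧
  ∀ f ∈ F, |uniformExp f - uniformExp (fun r => σ r * f (G r))| ≤ ε

/-- `G` is an `ε`-PRG for the class `F`. -/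
def IsPRG {n s : ℕ} {ι : Type} [Fintype ι]
    (F : Set ((Fin n → Fin s → Bool) → ℝ))
    (G : ι → Fin n → Fin s → Bool) (ε : ℝ) : Prop :=
  ∀ f ∈ F, |uniformExp f - uniformExp (fun r => f (G r))| ≤ ε

/-- `(R, σ)` is a `(log₂ card ι, K, ε)`-weighted pseudorandom reduction from `F₀` to `F₁`. -/
def IsWPR {n₀ s₀ n₁ s₁ : ℕ} {ι : Type} [Fintype ι]
    (F₀ : Set ((Fin n₀ → Fin s₀ → Bool) → ℝ))
    (F₁ : Set ((Fin n₁ → Fin s₁ → Bool) → ℝ))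
    (R : (Fin n₁ → Fin s₁ → Bool) → ι → Fin n₀ → Fin s₀ → Bool)
    (σ : ι → ℝ) (K ε : ℝ) : Prop :=
  (∀ f ∈ F₀,
      |uniformExp f - uniformExp (fun i => σ i * uniformExp (fun x => f (R x i)))| ≤ ε) ∧
  (∀ i, |σ i| ≤ K) ∧
  (∀ f ∈ F₀, ∀ i, (fun x => f (R x i)) ∈ F₁)

def ROBP.Regular {n s w : ℕ} (P : ROBP n s w) : Prop :=
  ∀ (i : Fin n) (v : Fin w),
    (Finset.univ.filter (fun ux : Fin w × (Fin s → Bool) => P.δ i ux.1 ux.2 = v)).card = 2 ^ s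

def ROBP.Permutation {n s w : ℕ} (P : ROBP n s w) : Prop :=
  ∀ (i : Fin n) (x : Fin s → Bool), Function.Bijective (fun u => P.δ i u x)

/-- Regular ROBPs of length `n`, alphabet `{0,1}^s`, width `w`. -/
def Rclass (n s w : ℕ) : Set ((Fin n → Fin s → Bool) → ℝ) :=
  {f | ∃ P : ROBP n s w, P.Regular ∧ f = P.fn}

/-- Permutation ROBPs of length `n` over `{0,1}^s`, unbounded width, a single accept node. -/
def Pclass (n s : ℕ) : Set ((Fin n → Fin s → Bool) → ℝ) :=
  {f | ∃ (w : ℕ) (P : ROBP n s w), P.Permutation ∧ P.accept.card = 1 ∧ f = P.fn}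

/-- Permutation ROBPs of length `n`, alphabet `{0,1}^s`, width `w`, arbitrary accept set. -/
def PermClass (n s w : ℕ) : Set ((Fin n → Fin s → Bool) → ℝ) :=
  {f | ∃ P : ROBP n s w, P.Permutation ∧ f = P.fn}

/-- Run `P` starting from node `v` in layer `i` (only the transitions from layer `i` on are applied). -/
def ROBP.runFrom {n s w : ℕ} (P : ROBP n s w) (i : ℕ) (v : Fin w)
    (x : Fin n → Fin s → Bool) : Fin w :=
  Fin.foldl n (fun u j => if i ≤ (j : ℕ) then P.δ j u (x j) else u) v

/-- Acceptance probability of the subprogram of `P` started at node `v` of layer `i`. -/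
def ROBP.valueAt {n s w : ℕ} (P : ROBP n s w) (i : ℕ) (v : Fin w) : ℝ :=
  uniformExp (fun x : Fin n → Fin s → Bool => if P.runFrom i v x ∈ P.accept then (1 : ℝ) else 0)

/-- The weight `W(f)` of an ROBP: the sum over all edges of the differences of acceptance values. -/
def ROBP.weight {n s w : ℕ} (P : ROBP n s w) : ℝ :=
  ∑ i : Fin n, ∑ u : Fin w, ∑ x : Fin s → Bool,
    |P.valueAt ((i : ℕ) + 1) (P.δ i u x) - P.valueAt (i : ℕ) u|

/-- `(k,ε)`-extractor. -/
def IsExtractor (N d m : ℕ)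
    (Ext : (Fin N → Bool) → (Fin d → Bool) → (Fin m → Bool)) (k ε : ℝ) : Prop :=
  ∀ p : (Fin N → Bool) → ℝ,
    (∀ x, 0 ≤ p x) → (∑ x, p x) = 1 → (∀ x, p x ≤ (2 : ℝ) ^ (-k)) →
    (1 / 2) * ∑ z : Fin m → Bool,
      |(∑ x, ∑ y : Fin d → Bool, p x * (if Ext x y = z then (1 : ℝ) else 0)) / 2 ^ d
        - 1 / 2 ^ m| ≤ ε

/-- `(α,γ)`-averaging sampler. -/
def IsAvgSampler (r p q : ℕ)
    (Samp : (Fin r → Bool) → (Fin p → Bool) → (Fin q → Bool)) (α γ : ℝ) : Prop :=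
  ∀ f : (Fin q → Bool) → ℝ, (∀ z, -1 ≤ f z ∧ f z ≤ 1) →
    (∑ x : Fin r → Bool,
        if α ≤ |(∑ y : Fin p → Bool, f (Samp x y)) / 2 ^ p - uniformExp f| then (1 : ℝ) else 0)
      / 2 ^ r ≤ γ

/-- The matrix norm `‖M‖₁ = max_i Σ_j |M i j|`. -/
def matOneNorm {w : ℕ} (M : Matrix (Fin w) (Fin w) ℝ) : ℝ :=
  ⨆ i, ∑ j, |M i j|

end

/-!
The reduction feeds every layer the extractor output `Ext(i, yⱼ)` for one shared seed `i`, with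
weight `1`. Peeling off the last layer, the error of a program is the error of the shorter program
that accepts with the averaged values of the last layer, plus a one-layer error. For the latter,
condition on the node `u` reached before the last layer: given `u`, the seed is a source of
min-entropy `2s` as soon as `u` has probability at least `2⁻ˢ`, so the extractor fools the last
layer there; for a lighter node, `2ˢ` times its seed weight is a difference of two such sources,
so it costs at most `2ε'·2⁻ˢ`, where `ε' = ε/(3n)`. With `w ≤ 2ˢ` nodes one layer costs `3ε'`, and `n` layers
cost `3nε' = ε`.
-/

section UniformExp

variable {α β : Type*} [Fintype α] [Fintype β]

lemma uniformExp_sub (f g : α → ℝ) :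
    uniformExp (fun a => f a - g a) = uniformExp f - uniformExp g := by
  simp only [uniformExp, sum_sub_distrib, sub_div]

lemma uniformExp_mem_Icc {f : α → ℝ} (hf : ∀ a, f a ∈ Set.Icc 0 1) :
    uniformExp f ∈ Set.Icc 0 1 := by
  rcases isEmpty_or_nonempty α with _ | _
  · simp [uniformExp]
  refine ⟨div_nonneg (sum_nonneg fun a _ => (hf a).1) (Nat.cast_nonneg _), ?_⟩
  rw [uniformExp, div_le_one (by exact_mod_cast Fintype.card_pos)]
  calc ∑ a, f a ≤ ∑ _a : α, (1 : ℝ) := sum_le_sum fun a _ => (hf a).2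
    _ = Fintype.card α := by simp

lemma uniformExp_prod (f : α × β → ℝ) :
    uniformExp f = uniformExp (fun a => uniformExp (fun b => f (a, b))) := by
  simp only [uniformExp, Fintype.sum_prod_type, Fintype.card_prod, ← sum_div, Nat.cast_mul,
    div_div, mul_comm]

lemma uniformExp_comp_equiv (e : α ≃ β) (f : β → ℝ) : uniformExp (f ∘ e) = uniformExp f := by
  simp only [uniformExp, Function.comp_apply, e.sum_comp, Fintype.card_congr e]

lemma uniformExp_snoc {n : ℕ} (f : (Fin (n + 1) → α) → ℝ) :
    uniformExp f = uniformExp (fun x : Fin n → α => uniformExp (fun z => f (Fin.snoc x z))) := by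
  rw [← uniformExp_comp_equiv ((Equiv.prodComm _ _).trans (Fin.snocEquiv fun _ => α)),
    uniformExp_prod]
  rfl

end UniformExp

section Sources

variable {ι : Type*} [Fintype ι]

lemma Fintype.card_pos_of_two_le_mul {b : ℝ}
    (hb : 2 ≤ b * Fintype.card ι) : 0 < Fintype.card ι := by
  by_contra h
  rw [Nat.eq_zero_of_not_pos h, Nat.cast_zero, mul_zero] at hb
  norm_num at hb

lemma sum_comp_eq_sum_card_mul {Y κ : Type*} [Fintype Y] [Fintype κ] (W : Y → κ) (f : κ → ℝ) :
    ∑ y, f (W y) = ∑ u, (#{y | W y = u} : ℝ) * f u := by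
  rw [← Fintype.sum_fiberwise' W f]
  simp [Fintype.card_subtype]

lemma abs_sum_mul_le_half_sum_abs {g Δ : ι → ℝ} (hg : ∀ i, g i ∈ Set.Icc 0 1)
    (hΔ : ∑ i, Δ i = 0) : |∑ i, g i * Δ i| ≤ 1 / 2 * ∑ i, |Δ i| := by
  have hcenter : ∑ i, g i * Δ i = ∑ i, (g i - 1 / 2) * Δ i := by
    simp only [sub_mul, sum_sub_distrib, ← mul_sum, hΔ, mul_zero, sub_zero]
  rw [hcenter, mul_sum]
  refine (abs_sum_le_sum_abs _ _).trans (sum_le_sum fun i _ => ?_)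
  rw [abs_mul]
  gcongr
  exact abs_sub_le_iff.2 ⟨by linarith [(hg i).2], by linarith [(hg i).1]⟩

theorem IsExtractor.abs_sum_mul_sub_le {N d m : ℕ}
    {Ext : (Fin N → Bool) → (Fin d → Bool) → (Fin m → Bool)} {k ε : ℝ}
    (hExt : IsExtractor N d m Ext k ε) {p : (Fin N → Bool) → ℝ} (hp0 : ∀ x, 0 ≤ p x)
    (hp1 : ∑ x, p x = 1) (hpk : ∀ x, p x ≤ (2 : ℝ) ^ (-k)) {g : (Fin m → Bool) → ℝ}
    (hg : ∀ z, g z ∈ Set.Icc 0 1) :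
    |∑ x, p x * (uniformExp (fun y => g (Ext x y)) - uniformExp g)| ≤ ε := by
  set Δ : (Fin m → Bool) → ℝ := fun z =>
    (∑ x, ∑ y : Fin d → Bool, p x * (if Ext x y = z then (1 : ℝ) else 0)) / 2 ^ d - 1 / 2 ^ m
  have hΔ : ∀ h : (Fin m → Bool) → ℝ, ∑ z, h z * Δ z =
      ∑ x, p x * (uniformExp (fun y => h (Ext x y)) - uniformExp h) := by
    intro h
    simp only [Δ, uniformExp, Fintype.card_fun, Fintype.card_bool, Fintype.card_fin,
      Nat.cast_pow, Nat.cast_ofNat, mul_sub, sum_sub_distrib, ← sum_mul, hp1, one_mul,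
      mul_div_assoc', ← sum_div, mul_one]
    congr 2
    simp_rw [mul_sum]
    rw [sum_comm]
    refine sum_congr rfl fun x _ => ?_
    rw [sum_comm]
    refine sum_congr rfl fun y _ => ?_
    simp [mul_comm]
  have hΔsum : ∑ z, Δ z = 0 := by
    simpa [uniformExp] using hΔ 1
  rw [← hΔ]
  exact (abs_sum_mul_le_half_sum_abs hg hΔsum).trans (hExt p hp0 hp1 hpk)

/-- If the mass `m` of `q` is below `1`, then `q = p₁ - (1 - m) p₂` for the sources
`p₁ = q + θ (b - q)` and `p₂ ∝ b - q`; otherwise `q / m` is itself a source. -/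
theorem abs_sum_mul_le_of_forall_source {D : ι → ℝ} {b ε : ℝ} (hε : 0 ≤ ε)
    (hb : 2 ≤ b * Fintype.card ι)
    (hD : ∀ p : ι → ℝ, (∀ i, 0 ≤ p i) → ∑ i, p i = 1 → (∀ i, p i ≤ b) →
      |∑ i, p i * D i| ≤ ε)
    {q : ι → ℝ} (hq0 : ∀ i, 0 ≤ q i) (hqb : ∀ i, q i ≤ b) :
    |∑ i, q i * D i| ≤ ε * (∑ i, q i + 2) := by
  set m := ∑ i, q i
  have hm0 : 0 ≤ m := sum_nonneg fun i _ => hq0 i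
  rcases le_or_gt 1 m with hm | hm
  · have hsource := hD (fun i => q i / m) (fun i => div_nonneg (hq0 i) hm0)
      (by rw [← sum_div, div_self (by positivity)])
      (fun i => (div_le_self (hq0 i) hm).trans (hqb i))
    have hscale : ∑ i, q i * D i = m * ∑ i, q i / m * D i := by
      rw [mul_sum]
      exact sum_congr rfl fun i _ => by field_simp
    rw [hscale, abs_mul, abs_of_nonneg hm0]
    nlinarith
  · set c : ℝ := b * Fintype.card ι - m
    have hc : 1 ≤ c := by linarith
    have hgap : ∑ i, (b - q i) = c := by simp [sum_sub_distrib, c, m, mul_comm]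
    have hθ : (1 - m) / c ≤ 1 := div_le_one_of_le₀ (by linarith) (by linarith)
    have hp₁ := hD (fun i => q i + (1 - m) / c * (b - q i))
      (fun i => add_nonneg (hq0 i) (mul_nonneg (by positivity) (by linarith [hqb i])))
      (by rw [sum_add_distrib, ← mul_sum, hgap, div_mul_cancel₀ _ (by positivity)]; ring)
      (fun i => by nlinarith [hqb i, hq0 i])
    have hp₂ := hD (fun i => (b - q i) / c)
      (fun i => div_nonneg (by linarith [hqb i]) (by positivity))
      (by rw [← sum_div, hgap, div_self (by positivity)])
      (fun i => (div_le_self (by linarith [hqb i]) hc).trans (by linarith [hq0 i]))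
    have hsplit : ∑ i, q i * D i = ∑ i, (q i + (1 - m) / c * (b - q i)) * D i
        - (1 - m) * ∑ i, (b - q i) / c * D i := by
      rw [mul_sum, ← sum_sub_distrib]
      exact sum_congr rfl fun i _ => by field_simp; ring
    rw [hsplit]
    calc _ ≤ ε + (1 - m) * ε := by
          refine (abs_sub _ _).trans (add_le_add hp₁ ?_)
          rw [abs_mul, abs_of_pos (by linarith)]
          exact mul_le_mul_of_nonneg_left hp₂ (by linarith)
      _ ≤ ε * (m + 2) := by nlinarith

theorem abs_uniformExp_uniformExp_le_of_forall_source {κ Y : Type*} [Fintype κ] [Fintype Y]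
    {b ε : ℝ} (hε : 0 ≤ ε) (hb : 2 ≤ b * Fintype.card ι) (G : κ → ι → ℝ)
    (hG : ∀ u, ∀ p : ι → ℝ, (∀ i, 0 ≤ p i) → ∑ i, p i = 1 → (∀ i, p i ≤ b) →
      |∑ i, p i * G u i| ≤ ε)
    (W : ι → Y → κ) :
    |uniformExp (fun i => uniformExp (fun y => G (W i y) i))|
      ≤ ε * (1 + 2 * Fintype.card κ / (b * Fintype.card ι)) := by
  have hcI : (0 : ℝ) < Fintype.card ι := by exact_mod_cast Fintype.card_pos_of_two_le_mul hb
  have hb0 : 0 < b := pos_of_mul_pos_left (by linarith) hcI.le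
  set μ : κ → ι → ℝ := fun u i => (#{y | W i y = u} : ℝ) / Fintype.card Y
  have hμ0 : ∀ u i, 0 ≤ μ u i := fun u i => by positivity
  have hμ1 : ∀ u i, μ u i ≤ 1 := fun u i =>
    div_le_one_of_le₀ (by exact_mod_cast card_filter_le _ _) (Nat.cast_nonneg _)
  have hμsum : ∀ i, ∑ u, μ u i ≤ 1 := fun i => by
    have hcount := sum_comp_eq_sum_card_mul (W i) (fun _ => (1 : ℝ))
    simp only [sum_const, card_univ, nsmul_eq_mul, mul_one] at hcount
    rw [← sum_div, ← hcount]
    exact div_self_le_one _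
  have hexp : ∀ i, uniformExp (fun y => G (W i y) i) = ∑ u, μ u i * G u i := fun i => by
    rw [uniformExp, sum_comp_eq_sum_card_mul (W i) (fun u => G u i), sum_div]
    exact sum_congr rfl fun u _ => mul_div_right_comm _ _ _
  have hnode : ∀ u, |∑ i, μ u i * G u i| ≤ ε * (∑ i, μ u i + 2 / b) := fun u => by
    have h := abs_sum_mul_le_of_forall_source hε hb (hG u) (q := fun i => b * μ u i)
      (fun i => mul_nonneg hb0.le (hμ0 u i))
      (fun i => mul_le_of_le_one_right hb0.le (hμ1 u i))
    simp only [mul_assoc, ← mul_sum, abs_mul, abs_of_pos hb0] at h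
    rw [← mul_le_mul_iff_of_pos_left hb0]
    calc _ ≤ _ := h
      _ = b * (ε * (∑ i, μ u i + 2 / b)) := by field_simp
  calc |uniformExp (fun i => uniformExp (fun y => G (W i y) i))|
      = |∑ u, ∑ i, μ u i * G u i| / Fintype.card ι := by
        rw [uniformExp, abs_div, Nat.abs_cast, sum_comm]
        simp only [hexp]
    _ ≤ (∑ u, ε * (∑ i, μ u i + 2 / b)) / Fintype.card ι := by
        gcongr
        exact (abs_sum_le_sum_abs _ _).trans (sum_le_sum fun u _ => hnode u)
    _ = ε * (∑ i, ∑ u, μ u i + 2 * Fintype.card κ / b) / Fintype.card ι := by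
        rw [← mul_sum, sum_add_distrib, sum_comm]
        simp only [sum_const, card_univ, nsmul_eq_mul]
        ring
    _ ≤ ε * (Fintype.card ι + 2 * Fintype.card κ / b) / Fintype.card ι := by
        gcongr
        calc ∑ i, ∑ u, μ u i ≤ ∑ _i : ι, (1 : ℝ) := sum_le_sum fun i _ => hμsum i
          _ = Fintype.card ι := by simp
    _ = ε * (1 + 2 * Fintype.card κ / (b * Fintype.card ι)) := by
        field_simp

end Sources

section Walk

variable {S α : Type*}

def walk {n : ℕ} (δ : Fin n → S → α → S) (v : S) (x : Fin n → α) : S :=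
  Fin.foldl n (fun u j => δ j u (x j)) v

@[simp]
lemma walk_zero (δ : Fin 0 → S → α → S) (v : S) (x : Fin 0 → α) : walk δ v x = v :=
  Fin.foldl_zero _ _

lemma walk_snoc {n : ℕ} (δ : Fin (n + 1) → S → α → S) (v : S) (x : Fin n → α) (z : α) :
    walk δ v (Fin.snoc x z) = δ (Fin.last n) (walk (fun j => δ j.castSucc) v x) z := by
  simp only [walk, Fin.foldl_succ_last, Fin.snoc_castSucc, Fin.snoc_last]

variable {β ι : Type*} [Fintype S] [Fintype α] [Fintype β] [Fintype ι]

theorem abs_uniformExp_walk_sub_le {E : ι → β → α} {b ε : ℝ} (hε : 0 ≤ ε)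
    (hb : 2 ≤ b * Fintype.card ι)
    (hE : ∀ g : α → ℝ, (∀ z, g z ∈ Set.Icc 0 1) → ∀ p : ι → ℝ, (∀ i, 0 ≤ p i) →
      ∑ i, p i = 1 → (∀ i, p i ≤ b) →
      |∑ i, p i * (uniformExp (fun y => g (E i y)) - uniformExp g)| ≤ ε)
    {n : ℕ} (δ : Fin n → S → α → S) (v : S) {a : S → ℝ} (ha : ∀ u, a u ∈ Set.Icc 0 1) :
    |uniformExp (fun x => a (walk δ v x))
        - uniformExp (fun i => uniformExp (fun y => a (walk δ v (E i ∘ y))))|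
      ≤ n * (ε * (1 + 2 * Fintype.card S / (b * Fintype.card ι))) := by
  induction n generalizing a with
  | zero =>
    have hcI : (Fintype.card ι : ℝ) ≠ 0 := by
      exact_mod_cast (Fintype.card_pos_of_two_le_mul hb).ne'
    simp [uniformExp, hcI]
  | succ n ih =>
    set δ' : Fin n → S → α → S := fun j => δ j.castSucc
    set a' : S → ℝ := fun u => uniformExp (fun z => a (δ (Fin.last n) u z))
    set G : S → ι → ℝ := fun u i => uniformExp (fun z => a (δ (Fin.last n) u (E i z))) - a' u
    have htrue : uniformExp (fun x => a (walk δ v x)) = uniformExp (fun x => a' (walk δ' v x)) := by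
      simp only [uniformExp_snoc (fun x => a (walk δ v x)), walk_snoc, a', δ']
    have hpseudo : uniformExp (fun i => uniformExp (fun y => a (walk δ v (E i ∘ y))))
        = uniformExp (fun i => uniformExp (fun y => a' (walk δ' v (E i ∘ y))))
          + uniformExp (fun i => uniformExp (fun y => G (walk δ' v (E i ∘ y)) i)) := by
      simp only [G, uniformExp_sub]
      simp only [uniformExp_snoc (fun y => a (walk δ v (_ ∘ y))), Fin.comp_snoc, walk_snoc]
      ring
    have hlayer := abs_uniformExp_uniformExp_le_of_forall_source hε hb G
      (fun u => hE (fun z => a (δ (Fin.last n) u z)) fun z => ha _)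
      (fun i y => walk δ' v (E i ∘ y))
    have hrest := ih δ' (a := a') fun u => uniformExp_mem_Icc fun z => ha _
    rw [htrue, hpseudo, ← sub_sub]
    refine (abs_sub _ _).trans ?_
    push_cast
    linarith

end Walk

lemma two_rpow_neg_two_mul_mul_two_pow_three_mul (s : ℕ) :
    (2 : ℝ) ^ (-(2 * (s : ℝ))) * 2 ^ (3 * s) = 2 ^ s := by
  rw [show 2 * (s : ℝ) = ((2 * s : ℕ) : ℝ) by push_cast; ring,
    Real.rpow_neg zero_le_two, Real.rpow_natCast, show 3 * s = 2 * s + s by ring, pow_add,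
    ← mul_assoc, inv_mul_cancel₀ (by positivity), one_mul]

theorem ROBP.abs_uniformExp_fn_sub_le {n s w d : ℕ} (hs : 0 < s) (P : ROBP n s w)
    {Ext : (Fin (3 * s) → Bool) → (Fin d → Bool) → (Fin s → Bool)} {ε : ℝ} (hε : 0 ≤ ε)
    (hExt : IsExtractor (3 * s) d s Ext (2 * (s : ℝ)) ε) :
    |uniformExp P.fn - uniformExp (fun i =>
        uniformExp (fun y : Fin n → Fin d → Bool => P.fn (fun j => Ext i (y j))))|
      ≤ n * (ε * (1 + 2 * w / 2 ^ s)) := by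
  have hseed : (2 : ℝ) ^ (-(2 * (s : ℝ))) * Fintype.card (Fin (3 * s) → Bool) = 2 ^ s := by
    simpa using two_rpow_neg_two_mul_mul_two_pow_three_mul s
  have hb : 2 ≤ (2 : ℝ) ^ (-(2 * (s : ℝ))) * Fintype.card (Fin (3 * s) → Bool) := by
    rw [hseed]
    exact le_self_pow₀ one_le_two hs.ne'
  have hwalk := abs_uniformExp_walk_sub_le hε hb
    (fun g hg p hp0 hp1 hpk => hExt.abs_sum_mul_sub_le hp0 hp1 hpk hg) P.δ P.start
    (a := fun u => if u ∈ P.accept then 1 else 0) (fun u => by split_ifs <;> simp)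
  rwa [hseed, Fintype.card_fin] at hwalk

lemma natCast_le_two_pow_of_logb_le {w s : ℕ} (hw : 0 < w) (hsw : logb 2 (w : ℝ) ≤ s) :
    (w : ℝ) ≤ 2 ^ s := by
  rw [← Real.rpow_natCast]
  exact (Real.logb_le_iff_le_rpow one_lt_two (by exact_mod_cast hw)).1 hsw

theorem stmt3_general (w n s d : ℕ) (hw : 0 < w) (hn : 0 < n) (hs : 0 < s)
    (hsw : logb 2 (w : ℝ) ≤ (s : ℝ)) (ε : ℝ) (hε : 0 < ε)
    (Ext : (Fin (3 * s) → Bool) → (Fin d → Bool) → (Fin s → Bool))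
    (hExt : IsExtractor (3 * s) d s Ext (2 * (s : ℝ)) (ε / (3 * n))) :
    ∃ (R : (Fin n → Fin d → Bool) → (Fin (3 * s) → Bool) → Fin n → Fin s → Bool)
      (σ : (Fin (3 * s) → Bool) → ℝ),
      IsWPR (Bclass n s w) (Bclass n d w) R σ 1 ε := by
  refine ⟨fun y i j => Ext i (y j), fun _ => 1, ?_, fun _ => by norm_num, ?_⟩
  · rintro f ⟨P, rfl⟩
    have hwidth : 2 * (w : ℝ) / 2 ^ s ≤ 2 := by
      rw [div_le_iff₀ (by positivity)]
      linarith [natCast_le_two_pow_of_logb_le hw hsw]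
    simp only [one_mul]
    calc _ ≤ n * (ε / (3 * n) * (1 + 2 * w / 2 ^ s)) :=
          P.abs_uniformExp_fn_sub_le hs (by positivity) hExt
      _ ≤ n * (ε / (3 * n) * 3) := by gcongr; linarith
      _ = ε := by field_simp
  · rintro f ⟨P, rfl⟩ i
    exact ⟨⟨fun j v z => P.δ j v (Ext i z), P.start, P.accept⟩, rfl⟩

theorem stmt3 (w n s d : ℕ) (hw : 0 < w) (hn : 0 < n) (hs : 0 < s) (hd : 0 < d)
    (hsw : logb 2 (w : ℝ) ≤ (s : ℝ)) (ε : ℝ) (hε : 0 < ε) (hε1 : ε < 1)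
    (Ext : (Fin (3 * s) → Bool) → (Fin d → Bool) → (Fin s → Bool))
    (hExt : IsExtractor (3 * s) d s Ext (2 * (s : ℝ)) (ε / (3 * n))) :
    ∃ (R : (Fin n → Fin d → Bool) → (Fin (3 * s) → Bool) → Fin n → Fin s → Bool)
      (σ : (Fin (3 * s) → Bool) → ℝ),
      IsWPR (Bclass n s w) (Bclass n d w) R σ 1 ε :=
  stmt3_general w n s d hw hn hs hsw ε hε Ext hExt
end

section
/- Let ‖·‖ be a submultiplicative norm on ℝ^{w×w}, n a positive integer, and ε ∈ (0,1). Let A₁,…,Aₙ ∈ ℝ^{w×w} satisfy ‖A_i‖ ≤ 1 for all i, and let matrices B_{i,j} ∈ ℝ^{w×w} for 0 ≤ i ≤ j ≤ n satisfy B_{i,i} = I for all i, B_{i−1,i} = A_i for all i ∈ [n], and ‖B_{i,j} − A_{i+1}A_{i+2}⋯A_j‖ ≤ ε/(2(n+1)) whenever i+1 < j. Then for every positive odd integer k, setting K = (8n)^{k+1}, there exist indices 0 ≤ n_{i,1} ≤ n_{i,2} ≤ … ≤ n_{i,k} = n and signs σ_i ∈ {−1,0,1} for each i ∈ [K] such that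 ‖A₁A₂⋯Aₙ − Σ_{i=1}^{K} σ_i · B_{0,n_{i,1}} B_{n_{i,1},n_{i,2}} ⋯ B_{n_{i,k−1},n_{i,k}}‖ ≤ ε^{(k+1)/2}·(n+1). -/
open Real Finset
open scoped Classical

/-!
Write `P j = A j * ⋯ * A (n - 1)` and `D j l = B j (l + 1) - B j l * B l (l + 1)`. Since
`B l (l + 1) = A l` and `B j j = 1`, the sum `∑_{j ≤ l < n} D j l * P (l + 1)` telescopes to
`B j n - P j`, so the exact products solve `P j = B j n - ∑ l, D j l * P (l + 1)`. The Richardson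
iteration `y₀ j = B j n`, `y_{m+1} j = B j n - ∑ l, D j l * y_m (l + 1)` therefore has error
`y_{m+1} j - P j = ∑ l, D j l * (P (l + 1) - y_m (l + 1))`, and `‖D j l‖ ≤ 2δ` with
`δ = ε / (2 (n + 1))` shrinks it by `2 n δ ≤ ε` per step. Expanding `y_a 0` for `k = 2a + 1` gives
at most `(2n + 1)^(a + 1)` signed products of `B` along monotone paths `0 → n` with `k + 1` nodes,
where `B i i = 1` pads every path to the same length.
-/

section Products

variable {R : Type*} [Ring R]

def partialProd (A : ℕ → R) (i j : ℕ) : R := ((List.range' i (j - i)).map A).prod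

lemma partialProd_self (A : ℕ → R) (i : ℕ) : partialProd A i i = 1 := by
  simp [partialProd]

lemma partialProd_eq_mul (A : ℕ → R) {i j : ℕ} (h : i < j) :
    partialProd A i j = A i * partialProd A (i + 1) j := by
  rw [partialProd, partialProd, show j - i = j - (i + 1) + 1 by omega, List.range'_succ,
    List.map_cons, List.prod_cons]

lemma partialProd_succ_right (A : ℕ → R) {i j : ℕ} (h : i ≤ j) :
    partialProd A i (j + 1) = partialProd A i j * A j := by
  rw [partialProd, partialProd, show j + 1 - i = j - i + 1 by omega, List.range'_concat,
    List.map_append, List.prod_append, show i + 1 * (j - i) = j by omega]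
  simp

def mulDefect (B : ℕ → ℕ → R) (j l : ℕ) : R := B j (l + 1) - B j l * B l (l + 1)

def richardson (B : ℕ → ℕ → R) (n : ℕ) : ℕ → ℕ → R
  | 0, j => B j n
  | m + 1, j => B j n - ∑ l ∈ Ico j n, mulDefect B j l * richardson B n m (l + 1)

variable {A : ℕ → R} {B : ℕ → ℕ → R} {n j : ℕ}

lemma sum_mulDefect_mul_partialProd (hBjj : B j j = 1) (hBstep : ∀ l < n, B l (l + 1) = A l)
    (hj : j ≤ n) :
    ∑ l ∈ Ico j n, mulDefect B j l * partialProd A (l + 1) n = B j n - partialProd A j n := by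
  calc _ = ∑ l ∈ Ico j n, (B j (l + 1) * partialProd A (l + 1) n - B j l * partialProd A l n) := by
        refine sum_congr rfl fun l hl => ?_
        have hl : l < n := (mem_Ico.1 hl).2
        rw [mulDefect, hBstep l hl, partialProd_eq_mul A hl, sub_mul, mul_assoc]
    _ = _ := by
        rw [sum_Ico_sub (fun l => B j l * partialProd A l n) hj, partialProd_self, mul_one, hBjj,
          one_mul]

lemma richardson_succ_sub_partialProd (hBjj : B j j = 1) (hBstep : ∀ l < n, B l (l + 1) = A l)
    (hj : j ≤ n) (m : ℕ) :
    richardson B n (m + 1) j - partialProd A j n =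
      ∑ l ∈ Ico j n, mulDefect B j l * (partialProd A (l + 1) n - richardson B n m (l + 1)) := by
  rw [richardson, sum_congr rfl fun l _ => mul_sub _ _ _, sum_sub_distrib,
    sum_mulDefect_mul_partialProd hBjj hBstep hj]
  abel

end Products

section Seminorm

variable {R : Type*} [Ring R] (p : RingSeminorm R) {A : ℕ → R} {B : ℕ → ℕ → R} {n : ℕ} {δ : ℝ}

lemma map_sub_partialProd_le (hδ : 0 ≤ δ) (hBii : ∀ i ≤ n, B i i = 1)
    (hBstep : ∀ i < n, B i (i + 1) = A i)
    (hBapprox : ∀ i j, i + 1 < j → j ≤ n → p (B i j - partialProd A i j) ≤ δ)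
    (i j : ℕ) (hij : i ≤ j) (hj : j ≤ n) : p (B i j - partialProd A i j) ≤ δ := by
  obtain rfl | rfl | hij := show j = i ∨ j = i + 1 ∨ i + 1 < j by omega
  · rwa [hBii _ hj, partialProd_self, sub_self, map_zero]
  · rwa [hBstep i (by omega), partialProd_eq_mul A (by omega), partialProd_self, mul_one,
      sub_self, map_zero]
  · exact hBapprox i j hij hj

variable (hA : ∀ l < n, p (A l) ≤ 1) (hBii : ∀ i ≤ n, B i i = 1)
  (hBstep : ∀ i < n, B i (i + 1) = A i)
  (hB : ∀ i j, i ≤ j → j ≤ n → p (B i j - partialProd A i j) ≤ δ)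
include hA hBstep hB

lemma map_mulDefect_le {j l : ℕ} (hjl : j ≤ l) (hl : l < n) : p (mulDefect B j l) ≤ 2 * δ := by
  have hsplit : mulDefect B j l =
      (B j (l + 1) - partialProd A j (l + 1)) - (B j l - partialProd A j l) * A l := by
    rw [mulDefect, hBstep l hl, partialProd_succ_right A hjl]
    noncomm_ring
  have hδ : 0 ≤ δ := (apply_nonneg p _).trans (hB l l le_rfl hl.le)
  calc p (mulDefect B j l)
      ≤ p (B j (l + 1) - partialProd A j (l + 1)) + p (B j l - partialProd A j l) * p (A l) := by
        rw [hsplit]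
        grw [map_sub_le_add, map_mul_le_mul]
    _ ≤ δ + δ * 1 := by
        gcongr
        exacts [hB j (l + 1) (by omega) hl, hB j l hjl hl.le, hA l hl]
    _ = 2 * δ := by ring

include hBii in
lemma map_richardson_sub_partialProd_le (m : ℕ) :
    ∀ j ≤ n, p (richardson B n m j - partialProd A j n) ≤ δ * (2 * n * δ) ^ m := by
  have hδ : 0 ≤ δ := (apply_nonneg p _).trans (hB 0 0 le_rfl n.zero_le)
  induction m with
  | zero => exact fun j hj => by simpa [richardson] using hB j n hj le_rfl
  | succ m ih =>
    intro j hj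
    rw [richardson_succ_sub_partialProd (hBii j hj) hBstep hj]
    calc _ ≤ ∑ l ∈ Ico j n,
            p (mulDefect B j l) * p (partialProd A (l + 1) n - richardson B n m (l + 1)) :=
          (le_sum_of_subadditive p (map_zero p).le (map_add_le_add p) _ _).trans
            (sum_le_sum fun _ _ => map_mul_le_mul p _ _)
      _ ≤ ∑ l ∈ Ico j n, 2 * δ * (δ * (2 * n * δ) ^ m) := by
          refine sum_le_sum fun l hl => ?_
          obtain ⟨hjl, hl⟩ := mem_Ico.1 hl
          gcongr
          · exact map_mulDefect_le p hA hBstep hB hjl hl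
          · rw [← map_neg_eq_map, neg_sub]
            exact ih (l + 1) hl
      _ ≤ n * (2 * δ * (δ * (2 * n * δ) ^ m)) := by
          rw [sum_const, Nat.card_Ico, nsmul_eq_mul]
          gcongr
          exact_mod_cast n.sub_le j
      _ = δ * (2 * n * δ) ^ (m + 1) := by ring

end Seminorm

lemma Fin.monotone_cons {α : Type*} [Preorder α] {r : ℕ} {a : α} {v : Fin (r + 1) → α}
    (hv : Monotone v) (ha : a ≤ v 0) : Monotone (Fin.cons a v : Fin (r + 2) → α) := by
  refine Fin.monotone_iff_le_succ.2 fun i => Fin.cases ?_ (fun i => ?_) i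
  · simpa using ha
  · simpa using hv i.castSucc_le_succ

def IsMonotonePath {r : ℕ} (j n : ℕ) (v : Fin (r + 1) → ℕ) : Prop :=
  v 0 = j ∧ v (Fin.last r) = n ∧ Monotone v

lemma isMonotonePath_const (r n : ℕ) : IsMonotonePath n n (fun _ : Fin (r + 1) => n) :=
  ⟨rfl, rfl, monotone_const⟩

lemma IsMonotonePath.cons {r a j n : ℕ} {v : Fin (r + 1) → ℕ} (hv : IsMonotonePath j n v)
    (ha : a ≤ j) : IsMonotonePath a n (Fin.cons a v : Fin (r + 2) → ℕ) :=
  ⟨rfl, by simpa [← Fin.succ_last] using hv.2.1, Fin.monotone_cons hv.2.2 (hv.1 ▸ ha)⟩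

section Paths

variable {R : Type*} [Ring R] (B : ℕ → ℕ → R) {r : ℕ}

def pathProd (v : Fin (r + 1) → ℕ) : R :=
  (List.ofFn fun i : Fin r => B (v i.castSucc) (v i.succ)).prod

lemma pathProd_cons (a : ℕ) (v : Fin (r + 1) → ℕ) :
    pathProd B (Fin.cons a v : Fin (r + 2) → ℕ) = B a (v 0) * pathProd B v := by
  simp [pathProd, List.ofFn_succ]

lemma pathProd_const {c : ℕ} (hc : B c c = 1) : pathProd B (fun _ : Fin (r + 1) => c) = 1 := by
  simp [pathProd, hc]

def signedPathSum : Multiset (ℤˣ × (Fin (r + 1) → ℕ)) →+ R :=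
  Multiset.sumAddMonoidHom.comp (Multiset.mapAddMonoidHom fun t => t.1 • pathProd B t.2)

lemma signedPathSum_apply (T : Multiset (ℤˣ × (Fin (r + 1) → ℕ))) :
    signedPathSum B T = (T.map fun t => t.1 • pathProd B t.2).sum := rfl

lemma signedPathSum_map_cons_cons {c : ℕ} (T : Multiset (ℤˣ × (Fin (r + 1) → ℕ)))
    (hT : ∀ t ∈ T, t.2 0 = c) (s : ℤˣ) (a b : ℕ) :
    signedPathSum B (T.map fun t => (s * t.1, (Fin.cons a (Fin.cons b t.2) : Fin (r + 3) → ℕ))) =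
      s • (B a b * B b c * signedPathSum B T) := by
  rw [signedPathSum_apply, signedPathSum_apply, Multiset.map_map, ← Multiset.sum_map_mul_left,
    Multiset.smul_sum, Multiset.map_map]
  refine congrArg Multiset.sum (Multiset.map_congr rfl fun t ht => ?_)
  simp only [Function.comp_apply, pathProd_cons, Fin.cons_zero, hT t ht, mul_smul, mul_smul_comm,
    mul_assoc]

/-- Expands `-mulDefect B j l * x`; the factor `B j (l + 1)` is padded to `B j j * B j (l + 1)` so
that both halves have the same length. -/
def defectPaths (j l : ℕ) (T : Multiset (ℤˣ × (Fin (r + 1) → ℕ))) :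
    Multiset (ℤˣ × (Fin (r + 3) → ℕ)) :=
  T.map (fun t => (-t.1, Fin.cons j (Fin.cons j t.2))) +
    T.map (fun t => (t.1, Fin.cons j (Fin.cons l t.2)))

lemma signedPathSum_defectPaths {j l : ℕ} {T : Multiset (ℤˣ × (Fin (r + 1) → ℕ))}
    (hBjj : B j j = 1) (hT : ∀ t ∈ T, t.2 0 = l + 1) :
    signedPathSum B (defectPaths j l T) = -(mulDefect B j l * signedPathSum B T) := by
  have hjj := signedPathSum_map_cons_cons B T hT (-1) j j
  have hjl := signedPathSum_map_cons_cons B T hT 1 j l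
  simp only [neg_one_mul, one_mul, one_smul, Units.neg_smul, hBjj] at hjj hjl
  rw [defectPaths, map_add, hjj, hjl, mulDefect]
  noncomm_ring

lemma card_defectPaths (j l : ℕ) (T : Multiset (ℤˣ × (Fin (r + 1) → ℕ))) :
    Multiset.card (defectPaths j l T) = 2 * Multiset.card T := by
  simp [defectPaths, two_mul]

lemma IsMonotonePath.of_mem_defectPaths {j l n : ℕ} {T : Multiset (ℤˣ × (Fin (r + 1) → ℕ))}
    (hjl : j ≤ l) (hT : ∀ t ∈ T, IsMonotonePath (l + 1) n t.2) :
    ∀ t ∈ defectPaths j l T, IsMonotonePath j n t.2 := by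
  simp only [defectPaths, Multiset.mem_add, Multiset.mem_map]
  rintro _ (⟨t, ht, rfl⟩ | ⟨t, ht, rfl⟩)
  · exact ((hT t ht).cons (hjl.trans l.le_succ)).cons le_rfl
  · exact ((hT t ht).cons l.le_succ).cons hjl

end Paths

lemma exists_richardson_eq_signedPathSum {R : Type*} [Ring R] {B : ℕ → ℕ → R} {n : ℕ}
    (hBii : ∀ i ≤ n, B i i = 1) (m : ℕ) :
    ∀ j ≤ n, ∃ T : Multiset (ℤˣ × (Fin (2 * m + 2) → ℕ)),
      Multiset.card T ≤ (2 * n + 1) ^ (m + 1) ∧ (∀ t ∈ T, IsMonotonePath j n t.2) ∧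
      richardson B n m j = signedPathSum B T := by
  have hdirect : ∀ {r j}, pathProd B (Fin.cons j fun _ => n : Fin (r + 2) → ℕ) = B j n := by
    intro r j
    rw [pathProd_cons, pathProd_const B (hBii n le_rfl), mul_one]
  induction m with
  | zero =>
    refine fun j hj => ⟨{(1, Fin.cons j fun _ => n)}, by simp, ?_, ?_⟩
    · simpa using (isMonotonePath_const 0 n).cons hj
    · simp [richardson, signedPathSum_apply, hdirect]
  | succ m ih =>
    intro j hj
    choose! T hcard hpath hsum using fun l (hl : l ∈ Ico j n) => ih (l + 1) (mem_Ico.1 hl).2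
    refine ⟨(1, Fin.cons j fun _ => n) ::ₘ ∑ l ∈ Ico j n, defectPaths j l (T l), ?_, ?_, ?_⟩
    · have hN : 1 ≤ (2 * n + 1) ^ (m + 1) := Nat.one_le_pow _ _ (by omega)
      calc Multiset.card _ ≤ ∑ l ∈ Ico j n, 2 * (2 * n + 1) ^ (m + 1) + 1 := by
            simp only [Multiset.card_cons, Multiset.card_sum, card_defectPaths]
            gcongr with l hl
            exact hcard l hl
        _ ≤ n * (2 * (2 * n + 1) ^ (m + 1)) + 1 := by
            rw [sum_const, Nat.card_Ico, smul_eq_mul]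
            gcongr
            exact n.sub_le j
        _ ≤ (2 * n + 1) ^ (m + 1 + 1) := by
            rw [pow_succ _ (m + 1)]
            nlinarith
    · simp only [Multiset.mem_cons, Multiset.mem_sum]
      rintro t (rfl | ⟨l, hl, ht⟩)
      · exact (isMonotonePath_const _ n).cons hj
      · exact IsMonotonePath.of_mem_defectPaths (mem_Ico.1 hl).1 (hpath l hl) t ht
    · rw [← Multiset.singleton_add, map_add, map_sum, richardson, sub_eq_add_neg,
        ← sum_neg_distrib]
      congr 1
      · simp [signedPathSum_apply, hdirect]
      refine sum_congr rfl fun l hl => ?_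
      rw [signedPathSum_defectPaths B (hBii j hj) fun t ht => (hpath l hl t ht).1, hsum l hl]

lemma exists_fin_sum_smul_eq_of_card_le {M α : Type*} [AddCommGroup M] [Module ℝ M] (f : α → M)
    {P : α → Prop} {T : Multiset (ℤˣ × α)} (hT : ∀ t ∈ T, P t.2) {a₀ : α} (ha₀ : P a₀) {K : ℕ}
    (hK : Multiset.card T ≤ K) :
    ∃ (x : Fin K → α) (σ : Fin K → ℝ), (∀ i, P (x i)) ∧ (∀ i, σ i = -1 ∨ σ i = 0 ∨ σ i = 1) ∧
      ∑ i, σ i • f (x i) = (T.map fun t => t.1 • f t.2).sum := by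
  obtain ⟨L, rfl⟩ := Quot.exists_rep T
  have hL : L.length ≤ K := hK
  let F : ℕ → M := fun i => if h : i < L.length then L[i].1 • f L[i].2 else 0
  refine ⟨fun i => if h : (i : ℕ) < L.length then L[(i : ℕ)].2 else a₀,
    fun i => if h : (i : ℕ) < L.length then ((L[(i : ℕ)].1 : ℤ) : ℝ) else 0,
    fun i => ?_, fun i => ?_, ?_⟩
  · dsimp only
    split_ifs
    exacts [hT _ (List.getElem_mem _), ha₀]
  · dsimp only
    split_ifs
    · rcases Int.units_eq_one_or L[(i : ℕ)].1 with h | h <;> simp [h]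
    · simp
  · calc _ = ∑ i : Fin K, F i := by
          refine sum_congr rfl fun i _ => ?_
          simp only [F]
          split_ifs
          · rw [Int.cast_smul_eq_zsmul, Units.smul_def]
          · exact zero_smul ℝ _
      _ = ∑ i ∈ range L.length, F i := by
          rw [Fin.sum_univ_eq_sum_range F K]
          exact (sum_subset (range_subset_range.2 hL) fun i _ hi =>
            dif_neg (by simpa using hi)).symm
      _ = ∑ i : Fin L.length, L[i].1 • f L[i].2 := by
          rw [← Fin.sum_univ_eq_sum_range F]
          exact sum_congr rfl fun i _ => dif_pos i.2
      _ = _ := Fin.sum_univ_fun_getElem L fun t => t.1 • f t.2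

def RingSeminorm.ofAbsHomogeneous {R : Type*} [Ring R] [Module ℝ R] (f : R → ℝ)
    (smul : ∀ (c : ℝ) x, f (c • x) = |c| * f x) (add_le : ∀ x y, f (x + y) ≤ f x + f y)
    (mul_le : ∀ x y, f (x * y) ≤ f x * f y) : RingSeminorm R where
  toFun := f
  map_zero' := by simpa using smul 0 0
  add_le' := add_le
  neg' x := by simpa using smul (-1) x
  mul_le' := mul_le

theorem stmt6_general (w n : ℕ) (hn : 0 < n) (ε : ℝ) (hε : 0 < ε)
    (nrm : Matrix (Fin w) (Fin w) ℝ → ℝ)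
    (h_smul : ∀ (c : ℝ) M, nrm (c • M) = |c| * nrm M)
    (h_tri : ∀ M N, nrm (M + N) ≤ nrm M + nrm N)
    (h_mul : ∀ M N, nrm (M * N) ≤ nrm M * nrm N)
    (A : ℕ → Matrix (Fin w) (Fin w) ℝ)
    (B : ℕ → ℕ → Matrix (Fin w) (Fin w) ℝ)
    (hA : ∀ i < n, nrm (A i) ≤ 1)
    (hBii : ∀ i ≤ n, B i i = 1)
    (hBstep : ∀ i < n, B i (i + 1) = A i)
    (hBapprox : ∀ i j : ℕ, i + 1 < j → j ≤ n →
      nrm (B i j - ((List.range' i (j - i)).map A).prod) ≤ ε / (2 * ((n : ℝ) + 1)))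
    (k : ℕ) (hk : Odd k) :
    ∃ (idx : Fin ((8 * n) ^ (k + 1)) → Fin (k + 1) → ℕ)
      (σ : Fin ((8 * n) ^ (k + 1)) → ℝ),
      (∀ i, idx i 0 = 0 ∧ idx i (Fin.last k) = n ∧ Monotone (idx i)) ∧
      (∀ i, σ i = -1 ∨ σ i = 0 ∨ σ i = 1) ∧
      nrm (((List.range' 0 n).map A).prod -
          ∑ i : Fin ((8 * n) ^ (k + 1)), σ i •
            (List.ofFn (fun j : Fin k => B (idx i j.castSucc) (idx i j.succ))).prod)
        ≤ ε ^ ((k + 1) / 2) * ((n : ℝ) + 1) := by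
  obtain ⟨a, rfl⟩ := hk
  set δ := ε / (2 * ((n : ℝ) + 1))
  have hδ : 0 ≤ δ := by positivity
  have hδε : 2 * ((n : ℝ) + 1) * δ = ε := mul_div_cancel₀ ε (by positivity)
  let p := RingSeminorm.ofAbsHomogeneous nrm h_smul h_tri h_mul
  have hB := map_sub_partialProd_le p hδ hBii hBstep hBapprox
  obtain ⟨T, hcard, hpath, hT⟩ := exists_richardson_eq_signedPathSum hBii a 0 n.zero_le
  have hK : Multiset.card T ≤ (8 * n) ^ (2 * a + 1 + 1) := hcard.trans <|
    (Nat.pow_le_pow_left (by omega) _).trans (Nat.pow_le_pow_right (by omega) (by omega))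
  obtain ⟨idx, σ, hidx, hσ, hsum⟩ := exists_fin_sum_smul_eq_of_card_le (pathProd B) hpath
    ((isMonotonePath_const _ n).cons n.zero_le) hK
  refine ⟨idx, σ, hidx, hσ, ?_⟩
  calc nrm _ = p (richardson B n a 0 - partialProd A 0 n) := by
        rw [← map_neg_eq_map, neg_sub, hT, signedPathSum_apply, ← hsum]
        rfl
    _ ≤ δ * (2 * n * δ) ^ a := map_richardson_sub_partialProd_le p hA hBii hBstep hB a 0 n.zero_le
    _ ≤ ε * ε ^ a := by
        gcongr <;> rw [← hδε] <;> nlinarith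
    _ ≤ ε ^ ((2 * a + 1 + 1) / 2) * ((n : ℝ) + 1) := by
        rw [show (2 * a + 1 + 1) / 2 = a + 1 by omega, pow_succ']
        exact le_mul_of_one_le_right (by positivity) (by linarith [n.cast_nonneg (α := ℝ)])

theorem stmt6 (w n : ℕ) (hn : 0 < n) (ε : ℝ) (hε : 0 < ε) (hε1 : ε < 1)
    (nrm : Matrix (Fin w) (Fin w) ℝ → ℝ)
    (h_nonneg : ∀ M, 0 ≤ nrm M)
    (h_def : ∀ M, nrm M = 0 ↔ M = 0)
    (h_smul : ∀ (c : ℝ) M, nrm (c • M) = |c| * nrm M)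
    (h_tri : ∀ M N, nrm (M + N) ≤ nrm M + nrm N)
    (h_mul : ∀ M N, nrm (M * N) ≤ nrm M * nrm N)
    (A : ℕ → Matrix (Fin w) (Fin w) ℝ)
    (B : ℕ → ℕ → Matrix (Fin w) (Fin w) ℝ)
    (hA : ∀ i < n, nrm (A i) ≤ 1)
    (hBii : ∀ i ≤ n, B i i = 1)
    (hBstep : ∀ i < n, B i (i + 1) = A i)
    (hBapprox : ∀ i j : ℕ, i + 1 < j → j ≤ n →
      nrm (B i j - ((List.range' i (j - i)).map A).prod) ≤ ε / (2 * ((n : ℝ) + 1)))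
    (k : ℕ) (hk : Odd k) :
    ∃ (idx : Fin ((8 * n) ^ (k + 1)) → Fin (k + 1) → ℕ)
      (σ : Fin ((8 * n) ^ (k + 1)) → ℝ),
      (∀ i, idx i 0 = 0 ∧ idx i (Fin.last k) = n ∧ Monotone (idx i)) ∧
      (∀ i, σ i = -1 ∨ σ i = 0 ∨ σ i = 1) ∧
      nrm (((List.range' 0 n).map A).prod -
          ∑ i : Fin ((8 * n) ^ (k + 1)), σ i •
            (List.ofFn (fun j : Fin k => B (idx i j.castSucc) (idx i j.succ))).prod)
        ≤ ε ^ ((k + 1) / 2) * ((n : ℝ) + 1) :=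
  stmt6_general w n hn ε hε nrm h_smul h_tri h_mul A B hA hBii hBstep hBapprox k hk
end

section
/- Let ‖·‖ be a submultiplicative norm on ℝ^{m×m}, let L ∈ ℝ^{m×m} be invertible, and let B ∈ ℝ^{m×m} satisfy ‖B − L^{−1}‖ ≤ ε₀. For a nonnegative integer k define R(B,L,k) = Σ_{i=0}^{k} (I − BL)^i B. Then ‖L^{−1} − R(B,L,k)‖ ≤ ‖L^{−1}‖ · ‖L‖^{k+1} · ε₀^{k+1}. -/
open Real Finset
open scoped Classical

-- STATEMENT 7
theorem stmt7 (m k : ℕ)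
    (nrm : Matrix (Fin m) (Fin m) ℝ → ℝ)
    (h_nonneg : ∀ M, 0 ≤ nrm M)
    (h_def : ∀ M, nrm M = 0 ↔ M = 0)
    (h_smul : ∀ (c : ℝ) M, nrm (c • M) = |c| * nrm M)
    (h_tri : ∀ M N, nrm (M + N) ≤ nrm M + nrm N)
    (h_mul : ∀ M N, nrm (M * N) ≤ nrm M * nrm N)
    (L B : Matrix (Fin m) (Fin m) ℝ) (hL : IsUnit L.det) (ε₀ : ℝ)
    (hB : nrm (B - L⁻¹) ≤ ε₀) :
    nrm (L⁻¹ - ∑ i ∈ Finset.range (k + 1), (1 - B * L) ^ i * B)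
      ≤ nrm L⁻¹ * nrm L ^ (k + 1) * ε₀ ^ (k + 1) := by

  set x := 1 - B * L with hx
  have hBL : B * L * L⁻¹ = B := by
    rw [Matrix.mul_assoc, Matrix.mul_nonsing_inv _ hL, Matrix.mul_one]
  have hBeq : B = (1 - x) * L⁻¹ := by
    simp [hx, Matrix.sub_mul, hBL]
  have hsum : (∑ i ∈ Finset.range (k + 1), x ^ i * B) = (1 - x ^ (k + 1)) * L⁻¹ := by
    rw [hBeq]
    rw [← Finset.sum_mul, ← Matrix.mul_assoc]
    have h2 : (∑ i ∈ Finset.range (k + 1), x ^ i) * (1 - x) = 1 - x ^ (k + 1) := by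
      have h := geom_sum_mul x (k + 1)
      have h3 : (∑ i ∈ Finset.range (k + 1), x ^ i) * (1 - x)
          = -((∑ i ∈ Finset.range (k + 1), x ^ i) * (x - 1)) := by noncomm_ring
      rw [h3, h]; noncomm_ring
    rw [h2]
  have hkey : L⁻¹ - ∑ i ∈ Finset.range (k + 1), x ^ i * B = x ^ (k + 1) * L⁻¹ := by
    rw [hsum]; noncomm_ring
  rw [hkey]
  have hxL : x = (L⁻¹ - B) * L := by
    simp [hx, Matrix.sub_mul, Matrix.nonsing_inv_mul _ hL]
  have hnx : nrm x ≤ ε₀ * nrm L := by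
    rw [hxL]
    calc nrm ((L⁻¹ - B) * L) ≤ nrm (L⁻¹ - B) * nrm L := h_mul _ _
      _ ≤ ε₀ * nrm L := by
        apply mul_le_mul_of_nonneg_right _ (h_nonneg L)
        have : L⁻¹ - B = (-1 : ℝ) • (B - L⁻¹) := by simp
        rw [this, h_smul]
        simpa using hB
  have hε₀ : 0 ≤ ε₀ := le_trans (h_nonneg _) hB
  have hpow : ∀ n : ℕ, nrm (x ^ (n + 1) * L⁻¹) ≤ nrm x ^ (n + 1) * nrm L⁻¹ := by
    intro n
    induction n with
    | zero => simpa using h_mul x L⁻¹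
    | succ n ih =>
      calc nrm (x ^ (n + 2) * L⁻¹) = nrm (x * (x ^ (n + 1) * L⁻¹)) := by
            rw [← Matrix.mul_assoc, ← pow_succ']
        _ ≤ nrm x * nrm (x ^ (n + 1) * L⁻¹) := h_mul _ _
        _ ≤ nrm x * (nrm x ^ (n + 1) * nrm L⁻¹) :=
            mul_le_mul_of_nonneg_left ih (h_nonneg x)
        _ = nrm x ^ (n + 2) * nrm L⁻¹ := by ring
  calc nrm (x ^ (k + 1) * L⁻¹) ≤ nrm x ^ (k + 1) * nrm L⁻¹ := hpow k
    _ ≤ (ε₀ * nrm L) ^ (k + 1) * nrm L⁻¹ := by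
        apply mul_le_mul_of_nonneg_right _ (h_nonneg _)
        exact pow_le_pow_left₀ (h_nonneg x) hnx _
    _ = nrm L⁻¹ * nrm L ^ (k + 1) * ε₀ ^ (k + 1) := by ring
end

section
/- Let Samp : {0,1}^r × {0,1}^p → {0,1}^q be an (α,γ)-averaging sampler, let C > 0, and let f : {0,1}^q → ℝ^{w×w} be a matrix-valued function with ‖f(z)‖₁ ≤ C for every z ∈ {0,1}^q. Then Pr_{x uniform in {0,1}^r}[ ‖2^{−p} Σ_{y ∈ {0,1}^p} f(Samp(x,y)) − E_{z uniform in {0,1}^q}[f(z)]‖₁ ≥ C·α·w ] ≤ w²·γ. -/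
open Real Finset
open scoped Classical

/-! Each entry of `f`, divided by `C`, is a `[-1,1]`-valued function, so the sampler controls every
entry of the averaged deviation matrix. If `‖·‖₁` of that matrix is at least `C α w`, some row has
absolute sum at least `C α w`, hence some entry is at least `C α` in absolute value; a union bound
over the `w²` entries finishes. -/

lemma uniformExp_eq_sum_div_two_pow {q : ℕ} (g : (Fin q → Bool) → ℝ) :
    uniformExp g = (∑ z, g z) / 2 ^ q := by
  simp [uniformExp]

lemma uniformExp_div_const {α : Type*} [Fintype α] (g : α → ℝ) (c : ℝ) :
    uniformExp (fun x => g x / c) = uniformExp g / c := by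
  simp only [uniformExp, ← sum_div, div_right_comm]

lemma inv_two_pow_smul_sum_apply {m n : Type*} {q : ℕ} (F : (Fin q → Bool) → Matrix m n ℝ)
    (i : m) (j : n) :
    (((2 : ℝ) ^ q)⁻¹ • ∑ z, F z) i j = uniformExp (fun z => F z i j) := by
  rw [uniformExp_eq_sum_div_two_pow, Matrix.smul_apply, Matrix.sum_apply, smul_eq_mul,
    inv_mul_eq_div]

lemma abs_apply_le_matOneNorm {w : ℕ} (M : Matrix (Fin w) (Fin w) ℝ) (i j : Fin w) :
    |M i j| ≤ matOneNorm M :=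
  (single_le_sum (fun j _ => abs_nonneg (M i j)) (mem_univ j)).trans
    (le_ciSup (f := fun i => ∑ j, |M i j|) (Set.finite_range _).bddAbove i)

lemma exists_le_abs_apply_of_mul_le_matOneNorm {w : ℕ} (hw : 0 < w)
    (M : Matrix (Fin w) (Fin w) ℝ) {c : ℝ} (h : c * w ≤ matOneNorm M) :
    ∃ i j, c ≤ |M i j| := by
  have : Nonempty (Fin w) := ⟨⟨0, hw⟩⟩
  obtain ⟨i, hi⟩ := Finite.exists_max (fun i : Fin w => ∑ j, |M i j|)
  have hrow : ∑ _j : Fin w, c ≤ ∑ j, |M i j| := by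
    rw [sum_const, card_univ, Fintype.card_fin, nsmul_eq_mul, mul_comm]
    exact h.trans (ciSup_le hi)
  obtain ⟨j, -, hj⟩ := exists_le_of_sum_le univ_nonempty hrow
  exact ⟨i, j, hj⟩

lemma ite_mul_le_matOneNorm_le_sum_ite {w : ℕ} (hw : 0 < w) (M : Matrix (Fin w) (Fin w) ℝ)
    (c : ℝ) :
    (if c * w ≤ matOneNorm M then (1 : ℝ) else 0) ≤
      ∑ i, ∑ j, if c ≤ |M i j| then (1 : ℝ) else 0 := by
  have hnonneg : ∀ i j, 0 ≤ if c ≤ |M i j| then (1 : ℝ) else 0 := fun _ _ => by positivity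
  split_ifs with h
  · obtain ⟨i, j, hij⟩ := exists_le_abs_apply_of_mul_le_matOneNorm hw M h
    calc (1 : ℝ) = if c ≤ |M i j| then 1 else 0 := (if_pos hij).symm
      _ ≤ ∑ j, if c ≤ |M i j| then (1 : ℝ) else 0 :=
        single_le_sum (fun j _ => hnonneg i j) (mem_univ j)
      _ ≤ _ := single_le_sum (fun i _ => sum_nonneg fun j _ => hnonneg i j) (mem_univ i)
  · exact sum_nonneg fun i _ => sum_nonneg fun j _ => hnonneg i j

lemma IsAvgSampler.prob_le_of_abs_le {r p q : ℕ}
    {Samp : (Fin r → Bool) → (Fin p → Bool) → (Fin q → Bool)} {α γ : ℝ}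
    (hSamp : IsAvgSampler r p q Samp α γ) {C : ℝ} (hC : 0 < C) (g : (Fin q → Bool) → ℝ)
    (hg : ∀ z, |g z| ≤ C) :
    (∑ x, if C * α ≤ |uniformExp (fun y => g (Samp x y)) - uniformExp g|
        then (1 : ℝ) else 0) / 2 ^ r ≤ γ := by
  have hscaled := hSamp (fun z => g z / C) fun z =>
    abs_le.mp ((abs_div _ _).trans_le (by rw [abs_of_pos hC, div_le_one hC]; exact hg z))
  refine le_of_eq_of_le ?_ hscaled
  congr 1
  refine sum_congr rfl fun x _ => if_congr ?_ rfl rfl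
  rw [← uniformExp_eq_sum_div_two_pow (fun y => g (Samp x y) / C), uniformExp_div_const,
    uniformExp_div_const, ← sub_div, abs_div, abs_of_pos hC, le_div_iff₀ hC, mul_comm]

theorem stmt9 (r p q w : ℕ) (hw : 0 < w)
    (Samp : (Fin r → Bool) → (Fin p → Bool) → (Fin q → Bool))
    (α γ C : ℝ) (hC : 0 < C)
    (hSamp : IsAvgSampler r p q Samp α γ)
    (f : (Fin q → Bool) → Matrix (Fin w) (Fin w) ℝ)
    (hf : ∀ z, matOneNorm (f z) ≤ C) :
    (∑ x : Fin r → Bool,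
        if C * α * w ≤ matOneNorm
            (((2 : ℝ) ^ p)⁻¹ • ∑ y : Fin p → Bool, f (Samp x y) -
              ((2 : ℝ) ^ q)⁻¹ • ∑ z : Fin q → Bool, f z)
          then (1 : ℝ) else 0) / 2 ^ r
      ≤ (w : ℝ) ^ 2 * γ := by
  set D : (Fin r → Bool) → Matrix (Fin w) (Fin w) ℝ := fun x =>
    ((2 : ℝ) ^ p)⁻¹ • ∑ y : Fin p → Bool, f (Samp x y) -
      ((2 : ℝ) ^ q)⁻¹ • ∑ z : Fin q → Bool, f z
  have hD : ∀ x i j, D x i j =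
      uniformExp (fun y => f (Samp x y) i j) - uniformExp (fun z => f z i j) := fun x i j => by
    simp only [D, Matrix.sub_apply, inv_two_pow_smul_sum_apply]
  have hentry : ∀ i j, (∑ x, if C * α ≤ |D x i j| then (1 : ℝ) else 0) / 2 ^ r ≤ γ :=
    fun i j => by
      simpa only [hD] using hSamp.prob_le_of_abs_le hC (fun z => f z i j)
        fun z => (abs_apply_le_matOneNorm _ i j).trans (hf z)
  calc (∑ x, if C * α * w ≤ matOneNorm (D x) then (1 : ℝ) else 0) / 2 ^ r
      ≤ (∑ x, ∑ i, ∑ j, if C * α ≤ |D x i j| then (1 : ℝ) else 0) / 2 ^ r := by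
        gcongr with x
        exact ite_mul_le_matOneNorm_le_sum_ite hw (D x) (C * α)
    _ = ∑ i, ∑ j, (∑ x, if C * α ≤ |D x i j| then (1 : ℝ) else 0) / 2 ^ r := by
        simp only [sum_div]
        rw [sum_comm]
        exact sum_congr rfl fun i _ => sum_comm
    _ ≤ ∑ _i : Fin w, ∑ _j : Fin w, γ := by gcongr with i _ j; exact hentry i j
    _ = (w : ℝ) ^ 2 * γ := by
        simp only [sum_const, card_univ, Fintype.card_fin, nsmul_eq_mul]
        ring
end

section
/- Let k ≥ 1 and let F₀, F₁, …, F_k be classes of functions, where F_j is a class of functions ({0,1}^{s_j})^{n_j} → ℝ. For j = 1,…,k let (R^{(j)}, σ^{(j)}) be a (d_j, K_j, ε_j)-weighted pseudorandom reduction from F_{j−1} to F_j. Then the composition (R^{(1)}∘⋯∘R^{(k)}, σ^{(1)}⋯σ^{(k)}), defined by (R^{(1)}∘⋯∘R^{(k)})(x,(i₁,…,i_k)) = R^{(1)}(R^{(2)}(⋯R^{(k)}(x,i_k)⋯, i₂), i₁) and (σ^{(1)}⋯σ^{(k)})(i₁,…,i_k) = Π_{j=1}^{k} σ^{(j)}(i_j),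 is a (Σ_{j=1}^{k} d_j, Π_{j=1}^{k} K_j, Σ_{j=1}^{k} (Π_{t=1}^{j−1} K_t)·ε_j)-weighted pseudorandom reduction from F₀ to F_k. -/
/-!
Composing two reductions `(R₁, σ₁)` (first) and `(R₂, σ₂)` (second) costs `ε₁ + K₁ ε₂`: for each
seed `i` of the first one, `y ↦ f (R₁ y i)` lies in the middle class, so replacing its mean by the
second reduction's estimate errs by at most `ε₂`, and these errors are averaged with weights
`|σ₁ i| ≤ K₁`. The `k`-fold composition is built up one stage at a time on the full seed space
`∏ₜ {0,1}^{dₜ}`: stage `j` ignores the seed coordinates `≥ j`, so overwriting coordinate `j` with a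
fresh seed, a map that preserves the uniform distribution, identifies stage `j + 1` with the
composition of stage `j` and `R j` on a product seed space.
-/

open Real Finset
open scoped Classical

def composeWPR {k : ℕ} {n s : Fin (k + 1) → ℕ} {d : Fin k → ℕ}
    (R : (j : Fin k) → (Fin (n j.succ) → Fin (s j.succ) → Bool) →
      (Fin (d j) → Bool) → Fin (n j.castSucc) → Fin (s j.castSucc) → Bool) :
    (j : ℕ) → (hj : j ≤ k) →
    (Fin (n ⟨j, Nat.lt_succ_of_le hj⟩) → Fin (s ⟨j, Nat.lt_succ_of_le hj⟩) → Bool) →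
    ((t : Fin k) → Fin (d t) → Bool) →
    Fin (n ⟨0, Nat.succ_pos k⟩) → Fin (s ⟨0, Nat.succ_pos k⟩) → Bool
  | 0, _, x, _ => x
  | j + 1, hj, x, i =>
      composeWPR R j (Nat.le_of_succ_le hj) (R ⟨j, hj⟩ x (i ⟨j, hj⟩)) i

open scoped BigOperators

theorem uniformExp_eq_expect {α : Type*} [Fintype α] (f : α → ℝ) :
    uniformExp f = 𝔼 x, f x :=
  (Fintype.expect_eq_sum_div_card f).symm

theorem expect_update {ι : Type*} [Fintype ι] [DecidableEq ι] {β : ι → Type*}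
    [∀ t, Fintype (β t)] (j : ι) [Nonempty (β j)] (g : ((t : ι) → β t) → ℝ) :
    𝔼 p : ((t : ι) → β t) × β j, g (Function.update p.1 j p.2) = 𝔼 i, g i := by
  have hinv : Function.Involutive
      (fun p : ((t : ι) → β t) × β j => (Function.update p.1 j p.2, p.1 j)) := by
    rintro ⟨i, a⟩
    simp
  rw [Fintype.expect_equiv hinv.toPerm (fun p => g (Function.update p.1 j p.2)) (fun q => g q.1)
      fun _ => rfl,
    ← univ_product_univ, expect_product]
  simp [expect_const]

section WPR

variable {n₀ s₀ n₁ s₁ n₂ s₂ : ℕ} {ι κ : Type} [Fintype ι] [Fintype κ]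
  {F₀ : Set ((Fin n₀ → Fin s₀ → Bool) → ℝ)} {F₁ : Set ((Fin n₁ → Fin s₁ → Bool) → ℝ)}
  {F₂ : Set ((Fin n₂ → Fin s₂ → Bool) → ℝ)}

theorem isWPR_id [Nonempty ι] (F : Set ((Fin n₀ → Fin s₀ → Bool) → ℝ)) :
    IsWPR (ι := ι) F F (fun x _ => x) (fun _ => 1) 1 0 :=
  ⟨fun f _ => by simp [uniformExp_eq_expect, expect_const], fun _ => by simp, fun _ hf _ => hf⟩

theorem IsWPR.comp [Nonempty ι]
    {R₁ : (Fin n₁ → Fin s₁ → Bool) → ι → Fin n₀ → Fin s₀ → Bool}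
    {R₂ : (Fin n₂ → Fin s₂ → Bool) → κ → Fin n₁ → Fin s₁ → Bool}
    {σ₁ : ι → ℝ} {σ₂ : κ → ℝ} {K₁ K₂ ε₁ ε₂ : ℝ}
    (h₁ : IsWPR F₀ F₁ R₁ σ₁ K₁ ε₁) (h₂ : IsWPR F₁ F₂ R₂ σ₂ K₂ ε₂) :
    IsWPR (ι := ι × κ) F₀ F₂ (fun x p => R₁ (R₂ x p.2) p.1) (fun p => σ₁ p.1 * σ₂ p.2)
      (K₁ * K₂) (ε₁ + K₁ * ε₂) := by
  obtain ⟨herr₁, hσ₁, hF₁⟩ := h₁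
  obtain ⟨herr₂, hσ₂, hF₂⟩ := h₂
  have hK₁ : ∀ i, 0 ≤ K₁ := fun i => (abs_nonneg _).trans (hσ₁ i)
  refine ⟨fun f hf => ?_, fun p => ?_, fun f hf p => hF₂ _ (hF₁ f hf p.1) p.2⟩
  · simp only [uniformExp_eq_expect] at herr₁ herr₂ ⊢
    have hsplit : 𝔼 p : ι × κ, σ₁ p.1 * σ₂ p.2 * 𝔼 x, f (R₁ (R₂ x p.2) p.1)
        = 𝔼 i, σ₁ i * 𝔼 a, σ₂ a * 𝔼 x, f (R₁ (R₂ x a) i) := by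
      simp only [← univ_product_univ, expect_product, mul_assoc, mul_expect]
    have hsecond : |𝔼 i, σ₁ i * 𝔼 y, f (R₁ y i) - 𝔼 i, σ₁ i * 𝔼 a, σ₂ a * 𝔼 x, f (R₁ (R₂ x a) i)|
        ≤ K₁ * ε₂ := by
      rw [← expect_sub_distrib]
      refine (abs_expect_le _ _).trans (expect_le univ_nonempty fun i _ => ?_)
      rw [← mul_sub, abs_mul]
      exact mul_le_mul (hσ₁ i) (herr₂ _ (hF₁ f hf i)) (abs_nonneg _) (hK₁ i)
    rw [hsplit]
    exact (abs_sub_le _ _ _).trans (add_le_add (herr₁ f hf) hsecond)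
  · rw [abs_mul]
    exact mul_le_mul (hσ₁ p.1) (hσ₂ p.2) (abs_nonneg _) (hK₁ p.1)

theorem IsWPR.of_comp {R : (Fin n₁ → Fin s₁ → Bool) → ι → Fin n₀ → Fin s₀ → Bool} {σ : ι → ℝ}
    {K ε : ℝ} (χ : κ → ι) (hχ : Function.Surjective χ)
    (hχ_expect : ∀ g : ι → ℝ, 𝔼 p, g (χ p) = 𝔼 i, g i)
    (h : IsWPR F₀ F₁ (fun x p => R x (χ p)) (fun p => σ (χ p)) K ε) :
    IsWPR F₀ F₁ R σ K ε := by
  obtain ⟨herr, hσ, hF⟩ := h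
  refine ⟨fun f hf => ?_, fun i => ?_, fun f hf i => ?_⟩
  · simpa only [uniformExp_eq_expect, hχ_expect fun i => σ i * 𝔼 x, f (R x i)] using herr f hf
  · obtain ⟨p, rfl⟩ := hχ i
    exact hσ p
  · obtain ⟨p, rfl⟩ := hχ i
    exact hF f hf p

end WPR

theorem Fin.filter_val_lt_succ {k j : ℕ} (hj : j < k) :
    univ.filter (fun t : Fin k => (t : ℕ) < j + 1)
      = insert ⟨j, hj⟩ (univ.filter fun t : Fin k => (t : ℕ) < j) := by
  ext t
  simp only [mem_filter, mem_univ, true_and, mem_insert, Fin.ext_iff]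
  omega

section Compose

variable {k : ℕ} {n s : Fin (k + 1) → ℕ} {d : Fin k → ℕ}
  (R : (j : Fin k) → (Fin (n j.succ) → Fin (s j.succ) → Bool) →
    (Fin (d j) → Bool) → Fin (n j.castSucc) → Fin (s j.castSucc) → Bool)

theorem composeWPR_congr : ∀ (j : ℕ) (hj : j ≤ k) x {i i' : (t : Fin k) → Fin (d t) → Bool},
    (∀ t : Fin k, (t : ℕ) < j → i t = i' t) → composeWPR R j hj x i = composeWPR R j hj x i'
  | 0, _, _, _, _, _ => rfl
  | j + 1, hj, x, i, i', hii => by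
    rw [composeWPR, composeWPR, hii ⟨j, hj⟩ j.lt_succ_self]
    exact composeWPR_congr j _ _ fun t ht => hii t (Nat.lt_succ_of_lt ht)

theorem composeWPR_succ_update (j : ℕ) (hj : j + 1 ≤ k) x (i : (t : Fin k) → Fin (d t) → Bool)
    (a : Fin (d ⟨j, hj⟩) → Bool) :
    composeWPR R (j + 1) hj x (Function.update i ⟨j, hj⟩ a)
      = composeWPR R j (Nat.le_of_succ_le hj) (R ⟨j, hj⟩ x a) i := by
  rw [composeWPR, Function.update_self]
  exact composeWPR_congr R j _ _ fun t ht => Function.update_of_ne (Fin.ne_of_val_ne ht.ne) _ _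

variable {F : (j : Fin (k + 1)) → Set ((Fin (n j) → Fin (s j) → Bool) → ℝ)}
  {K ε : Fin k → ℝ} {σ : (j : Fin k) → (Fin (d j) → Bool) → ℝ}

theorem isWPR_composeWPR
    (h : ∀ j : Fin k, IsWPR (F j.castSucc) (F j.succ) (R j) (σ j) (K j) (ε j)) :
    ∀ (j : ℕ) (hj : j ≤ k), IsWPR (ι := (t : Fin k) → Fin (d t) → Bool)
      (F ⟨0, Nat.succ_pos k⟩) (F ⟨j, Nat.lt_succ_of_le hj⟩)
      (fun x i => composeWPR R j hj x i)
      (fun i => ∏ t ∈ univ.filter (fun t : Fin k => (t : ℕ) < j), σ t (i t))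
      (∏ t ∈ univ.filter (fun t : Fin k => (t : ℕ) < j), K t)
      (∑ t ∈ univ.filter (fun t : Fin k => (t : ℕ) < j),
        (∏ t' ∈ univ.filter (fun t' => t' < t), K t') * ε t)
  | 0, _ => by simpa [composeWPR] using isWPR_id _
  | j + 1, hj => by
    set jF : Fin k := ⟨j, hj⟩
    have hprev : IsWPR (F ⟨0, Nat.succ_pos k⟩) (F ⟨j + 1, Nat.lt_succ_of_le hj⟩) _ _ _ _ :=
      (isWPR_composeWPR h j (Nat.le_of_succ_le hj)).comp (h jF)
    refine IsWPR.of_comp (fun p => Function.update p.1 jF p.2)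
      (fun i => ⟨(i, i jF), by simp⟩) (expect_update jF) ?_
    have hjF : jF ∉ univ.filter (fun t : Fin k => (t : ℕ) < j) := by simp [jF]
    convert hprev using 1
    · funext x p
      exact composeWPR_succ_update R j hj x p.1 p.2
    · funext p
      rw [Fin.filter_val_lt_succ hj, prod_insert hjF, Function.update_self, mul_comm]
      congr 1
      refine prod_congr rfl fun t ht => ?_
      rw [Function.update_of_ne (Fin.ne_of_val_ne (mem_filter.1 ht).2.ne)]
    · rw [Fin.filter_val_lt_succ hj, prod_insert hjF, mul_comm]
    · rw [Fin.filter_val_lt_succ hj, sum_insert hjF, add_comm]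
      rfl

end Compose

theorem stmt12_general (k : ℕ)
    (n s : Fin (k + 1) → ℕ)
    (F : (j : Fin (k + 1)) → Set ((Fin (n j) → Fin (s j) → Bool) → ℝ))
    (d : Fin k → ℕ) (K ε : Fin k → ℝ)
    (R : (j : Fin k) → (Fin (n j.succ) → Fin (s j.succ) → Bool) →
      (Fin (d j) → Bool) → Fin (n j.castSucc) → Fin (s j.castSucc) → Bool)
    (σ : (j : Fin k) → (Fin (d j) → Bool) → ℝ)
    (h : ∀ j : Fin k, IsWPR (F j.castSucc) (F j.succ) (R j) (σ j) (K j) (ε j)) :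
    IsWPR (ι := (t : Fin k) → Fin (d t) → Bool)
      (F ⟨0, Nat.succ_pos k⟩) (F (Fin.last k))
      (fun x i => composeWPR R k le_rfl x i)
      (fun i => ∏ j, σ j (i j))
      (∏ j, K j)
      (∑ j, (∏ t ∈ Finset.univ.filter (fun t => t < j), K t) * ε j) := by
  have hall : univ.filter (fun t : Fin k => (t : ℕ) < k) = univ :=
    filter_true_of_mem fun t _ => t.isLt
  have hcomp := isWPR_composeWPR R h k le_rfl
  rw [hall] at hcomp
  exact hcomp

theorem stmt12 (k : ℕ) (hk : 1 ≤ k)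
    (n s : Fin (k + 1) → ℕ)
    (F : (j : Fin (k + 1)) → Set ((Fin (n j) → Fin (s j) → Bool) → ℝ))
    (d : Fin k → ℕ) (K ε : Fin k → ℝ)
    (R : (j : Fin k) → (Fin (n j.succ) → Fin (s j.succ) → Bool) →
      (Fin (d j) → Bool) → Fin (n j.castSucc) → Fin (s j.castSucc) → Bool)
    (σ : (j : Fin k) → (Fin (d j) → Bool) → ℝ)
    (h : ∀ j : Fin k, IsWPR (F j.castSucc) (F j.succ) (R j) (σ j) (K j) (ε j)) :
    IsWPR (ι := (t : Fin k) → Fin (d t) → Bool)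
      (F ⟨0, Nat.succ_pos k⟩) (F (Fin.last k))
      (fun x i => composeWPR R k le_rfl x i)
      (fun i => ∏ j, σ j (i j))
      (∏ j, K j)
      (∑ j, (∏ t ∈ Finset.univ.filter (fun t => t < j), K t) * ε j) :=
  stmt12_general k n s F d K ε R σ h
end

section
/- For every regular ROBP f of length n and width w over the binary alphabet {0,1}, there exists a permutation ROBP f' of length n and width w over {0,1} such that E_{x uniform on {0,1}^n}[f'(x)] = E_{x uniform on {0,1}^n}[f(x)]. -/
open Real Finset
open scoped Classical

-- STATEMENT 19
section StmtNineteenAux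

private lemma sum_fin1bool {M : Type*} [AddCommMonoid M] (f : (Fin 1 → Bool) → M) :
    ∑ b : Fin 1 → Bool, f b = f (fun _ => true) + f (fun _ => false) := by
  rw [← (Equiv.funUnique (Fin 1) Bool).symm.sum_comp]
  rw [Fintype.sum_bool]
  rfl

private lemma key {w : ℕ} : ∀ (n : ℕ) (d d' : Fin n → Fin w → (Fin 1 → Bool) → Fin w),
    (∀ i u (g : Fin w → ℝ), (∑ b : Fin 1 → Bool, g (d' i u b)) = ∑ b : Fin 1 → Bool, g (d i u b)) →
    ∀ (g : Fin w → ℝ) (v0 : Fin w),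
      (∑ x : Fin n → Fin 1 → Bool, g (Fin.foldl n (fun v i => d' i v (x i)) v0))
        = ∑ x : Fin n → Fin 1 → Bool, g (Fin.foldl n (fun v i => d i v (x i)) v0) := by
  intro n
  induction n with
  | zero => intro d d' h g v0; simp
  | succ n ih =>
    intro d d' h g v0
    rw [← (Fin.snocEquiv (fun _ : Fin (n+1) => (Fin 1 → Bool))).sum_comp,
        ← (Fin.snocEquiv (fun _ : Fin (n+1) => (Fin 1 → Bool))).sum_comp,
        Fintype.sum_prod_type, Fintype.sum_prod_type]
    have hterm : ∀ (dd : Fin (n+1) → Fin w → (Fin 1 → Bool) → Fin w) (b : Fin 1 → Bool)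
        (y : Fin n → Fin 1 → Bool),
        Fin.foldl (n+1) (fun v i => dd i v
            ((Fin.snocEquiv (fun _ : Fin (n+1) => (Fin 1 → Bool))) (b, y) i)) v0
          = dd (Fin.last n) (Fin.foldl n (fun v i => dd i.castSucc v (y i)) v0) b := by
      intro dd b y
      rw [Fin.foldl_succ_last]
      simp
    simp only [hterm]
    calc (∑ b : Fin 1 → Bool, ∑ y : Fin n → Fin 1 → Bool,
            g (d' (Fin.last n) (Fin.foldl n (fun v i => d' i.castSucc v (y i)) v0) b))
        = ∑ y : Fin n → Fin 1 → Bool, ∑ b : Fin 1 → Bool,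
            g (d' (Fin.last n) (Fin.foldl n (fun v i => d' i.castSucc v (y i)) v0) b) :=
          Finset.sum_comm
      _ = ∑ y : Fin n → Fin 1 → Bool,
            (fun u => ∑ b : Fin 1 → Bool, g (d (Fin.last n) u b))
              (Fin.foldl n (fun v i => d' i.castSucc v (y i)) v0) :=
          Finset.sum_congr rfl (fun y _ => h _ _ g)
      _ = ∑ y : Fin n → Fin 1 → Bool,
            (fun u => ∑ b : Fin 1 → Bool, g (d (Fin.last n) u b))
              (Fin.foldl n (fun v i => d i.castSucc v (y i)) v0) :=
          ih (fun i => d i.castSucc) (fun i => d' i.castSucc)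
            (fun i u g => h i.castSucc u g) (fun u => ∑ b : Fin 1 → Bool, g (d (Fin.last n) u b)) v0
      _ = ∑ b : Fin 1 → Bool, ∑ y : Fin n → Fin 1 → Bool,
            g (d (Fin.last n) (Fin.foldl n (fun v i => d i.castSucc v (y i)) v0) b) :=
          Finset.sum_comm


private lemma layer_perm {w : ℕ} (d : Fin w → (Fin 1 → Bool) → Fin w)
    (hreg : ∀ v : Fin w, (Finset.univ.filter
      (fun ux : Fin w × (Fin 1 → Bool) => d ux.1 ux.2 = v)).card = 2) :
    ∃ d' : Fin w → (Fin 1 → Bool) → Fin w,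
      (∀ b : Fin 1 → Bool, Function.Bijective (fun u => d' u b)) ∧
      (∀ u (g : Fin w → ℝ), (∑ b : Fin 1 → Bool, g (d' u b)) = ∑ b : Fin 1 → Bool, g (d u b)) := by
  classical
  set t : Fin w → Finset (Fin w) :=
    fun u => {d u (fun _ => true), d u (fun _ => false)} with ht
  have hx0 : ∀ x : Fin 1 → Bool, x = (fun _ => x 0) := by
    intro x; funext j; rw [Subsingleton.elim j 0]
  have hhall : ∀ A : Finset (Fin w), A.card ≤ (A.biUnion t).card := by
    intro A
    have h1 : (A ×ˢ (Finset.univ : Finset (Fin 1 → Bool))).card = A.card * 2 := by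
      rw [Finset.card_product]; simp
    have hmaps : ∀ p ∈ A ×ˢ (Finset.univ : Finset (Fin 1 → Bool)),
        d p.1 p.2 ∈ A.biUnion t := by
      intro p hp
      rw [Finset.mem_product] at hp
      refine Finset.mem_biUnion.2 ⟨p.1, hp.1, ?_⟩
      rw [hx0 p.2]
      cases hb : p.2 0 <;> simp [ht, hb]
    have h2 : (A ×ˢ (Finset.univ : Finset (Fin 1 → Bool))).card ≤ 2 * (A.biUnion t).card := by
      refine Finset.card_le_mul_card_image_of_maps_to (f := fun p => d p.1 p.2) hmaps 2 ?_
      intro v _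
      calc ((A ×ˢ Finset.univ).filter (fun p : Fin w × (Fin 1 → Bool) => d p.1 p.2 = v)).card
          ≤ (Finset.univ.filter (fun p : Fin w × (Fin 1 → Bool) => d p.1 p.2 = v)).card :=
            Finset.card_le_card (Finset.filter_subset_filter _ (Finset.subset_univ _))
        _ = 2 := hreg v
    omega
  obtain ⟨m, hminj, hmem⟩ := (Finset.all_card_le_biUnion_card_iff_exists_injective t).1 hhall
  have hmbij : Function.Bijective m := Finite.injective_iff_bijective.1 hminj
  set q : Fin w → Fin w := fun u =>
    if d u (fun _ => true) = m u then d u (fun _ => false) else d u (fun _ => true) with hq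
  have hpair : ∀ u, (m u = d u (fun _ => true) ∧ q u = d u (fun _ => false)) ∨
      (m u = d u (fun _ => false) ∧ q u = d u (fun _ => true)) := by
    intro u
    have hmm := hmem u
    rw [ht] at hmm
    simp only [Finset.mem_insert, Finset.mem_singleton] at hmm
    by_cases h : d u (fun _ => true) = m u
    · left; exact ⟨h.symm, by simp [hq, h]⟩
    · rcases hmm with h' | h'
      · exact absurd h'.symm h
      · right; exact ⟨h', by simp [hq, h]⟩
  set d' : Fin w → (Fin 1 → Bool) → Fin w := fun u b => if b 0 then m u else q u with hd'
  have hsum : ∀ u (g : Fin w → ℝ),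
      (∑ b : Fin 1 → Bool, g (d' u b)) = ∑ b : Fin 1 → Bool, g (d u b) := by
    intro u g
    rw [sum_fin1bool, sum_fin1bool]
    simp only [hd']
    rcases hpair u with ⟨h1, h2⟩ | ⟨h1, h2⟩ <;> simp [h1, h2] <;> ring
  refine ⟨d', ?_, hsum⟩
  intro b
  by_cases hb : b 0
  · have hfun : (fun u => d' u b) = m := by funext u; simp [hd', hb]
    rw [hfun]; exact hmbij
  · have hfun : (fun u => d' u b) = q := by funext u; simp [hd', hb]
    rw [hfun]
    have hcount : ∀ v, (∑ u, (if q u = v then (1:ℝ) else 0)) = 1 := by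
      intro v
      have htot : ∀ u, (if m u = v then (1:ℝ) else 0) + (if q u = v then 1 else 0)
          = (if d u (fun _ => true) = v then 1 else 0)
            + (if d u (fun _ => false) = v then 1 else 0) := by
        intro u; rcases hpair u with ⟨h1, h2⟩ | ⟨h1, h2⟩ <;> rw [h1, h2] <;> ring
      have hm1 : (∑ u, (if m u = v then (1:ℝ) else 0)) = 1 := by
        calc (∑ u, if m u = v then (1:ℝ) else 0)
            = ∑ u, (fun x => if x = v then (1:ℝ) else 0) ((Equiv.ofBijective m hmbij) u) := rfl
          _ = ∑ x, (fun x => if x = v then (1:ℝ) else 0) x := Equiv.sum_comp (Equiv.ofBijective m hmbij) (fun x => if x = v then (1:ℝ) else 0)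
          _ = 1 := by simp
      have hd2 : (∑ u, ((if d u (fun _ => true) = v then (1:ℝ) else 0)
          + (if d u (fun _ => false) = v then 1 else 0))) = 2 := by
        have hc : (∑ ux : Fin w × (Fin 1 → Bool),
            (if d ux.1 ux.2 = v then (1:ℝ) else 0)) = 2 := by
          rw [Finset.sum_boole, hreg v]; norm_num
        rw [Fintype.sum_prod_type] at hc
        rw [← hc]
        exact Finset.sum_congr rfl (fun u _ => by
          rw [sum_fin1bool (fun b => if d u b = v then (1:ℝ) else 0)])
      have := Finset.sum_congr rfl (fun u (_ : u ∈ Finset.univ) => htot u)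
      rw [Finset.sum_add_distrib, hm1, hd2] at this
      linarith
    have hqinj : Function.Injective q := by
      intro a b hab
      have h1 := hcount (q b)
      rw [Finset.sum_boole] at h1
      have hcard : (Finset.univ.filter (fun u => q u = q b)).card = 1 := by
        exact_mod_cast h1
      exact Finset.card_le_one.1 (le_of_eq hcard) a
        (Finset.mem_filter.2 ⟨Finset.mem_univ _, hab⟩) b
        (Finset.mem_filter.2 ⟨Finset.mem_univ _, rfl⟩)
    exact Finite.injective_iff_bijective.1 hqinj


end StmtNineteenAux

theorem stmt19 (n w : ℕ) (P : ROBP n 1 w) (hP : P.Regular) :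
    ∃ P' : ROBP n 1 w, P'.Permutation ∧ uniformExp P'.fn = uniformExp P.fn := by
  classical
  choose d' hbij hsum using fun i : Fin n => layer_perm (P.δ i) (by simpa using hP i)
  refine ⟨⟨d', P.start, P.accept⟩, fun i x => hbij i x, ?_⟩
  have hkey := key n P.δ d' (fun i u g => hsum i u g)
    (fun v => if v ∈ P.accept then (1:ℝ) else 0) P.start
  have hnum : (∑ x : Fin n → Fin 1 → Bool, (ROBP.mk d' P.start P.accept).fn x)
      = ∑ x : Fin n → Fin 1 → Bool, P.fn x := by
    simp only [ROBP.fn, ROBP.run]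
    exact hkey
  simp only [uniformExp]
  rw [hnum]
end
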